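/- arXiv:1308.3417 — 2 statements merged into one kernel-verified Lean document; each statement's English description precedes it below -/
import Mathlib

section
/- Let k be an even positive integer and let g be a cusp form of weight k for Γ₀(4) satisfying g∣[k]T_{1/2} = -g. If g∣[k]W₄ = g, then g = 0. In other words, the Fricke involution W₄ has no nonzero fixed vector among cusp forms of weight k for Γ₀(4) whose Fourier expansion is supported on odd exponents. -/
open UpperHalfPlane Matrix MatrixGroups CongruenceSubgroup

noncomputable section

/-- An element of `GL(2,ℝ)⁺` built from a 2×2 real matrix of positive determinant. -/
def mkGLPos (M : Matrix (Fin 2) (Fin 2) ℝ) (h : 0 < M.det) : GL(2, ℝ)⁺ :=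
  ⟨Matrix.GeneralLinearGroup.mkOfDetNeZero M h.ne', by
    simpa [Matrix.mem_glpos, Matrix.GeneralLinearGroup.val_det_apply,
      Matrix.GeneralLinearGroup.mkOfDetNeZero] using h⟩

set_option synthInstance.maxHeartbeats 400000 in
/-- The weight-`k` slash operator with the classical normalization
`(f ∣[k] A)(τ) = det(A)^(k/2) · (cτ+d)^(-k) · f(Aτ)`. -/
def wtSlash (k : ℤ) (A : GL(2, ℝ)⁺) (f : ℍ → ℂ) : ℍ → ℂ := fun τ =>
  ((((A : GL (Fin 2) ℝ) : Matrix (Fin 2) (Fin 2) ℝ).det ^ ((k : ℝ) / 2) : ℝ) : ℂ) *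
    (UpperHalfPlane.denom A τ) ^ (-k) * f (A • τ)

/-- The image of an integral special linear matrix in `GL(2,ℝ)⁺`. -/
def toGL (γ : SL(2, ℤ)) : GL(2, ℝ)⁺ :=
  Matrix.SpecialLinearGroup.toGLPos (γ.map (Int.castRingHom ℝ))

/-- `W₄ = [[0,-1],[4,0]]` as an element of `GL(2,ℝ)⁺`. -/
def W4 : GL(2, ℝ)⁺ := mkGLPos !![0, -1; 4, 0] (by norm_num [Matrix.det_fin_two_of])

/-- `T_{1/2} = [[1,1/2],[0,1]]` as an element of `GL(2,ℝ)⁺`. -/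
def Thalf : GL(2, ℝ)⁺ := mkGLPos !![1, 1/2; 0, 1] (by norm_num [Matrix.det_fin_two_of])

/-!
`W₄ T_{1/2} = [[0,-1],[4,2]]` has cube `-8 · I`, and a scalar matrix acts trivially in even
weight. The hypotheses give `g ∣ W₄ T_{1/2} = -g`, hence `g = g ∣ (W₄ T_{1/2})³ = -g`.
-/

lemma det_pos_of_glPos (A : GL(2, ℝ)⁺) :
    0 < ((A : GL (Fin 2) ℝ) : Matrix (Fin 2) (Fin 2) ℝ).det := by
  simpa only [GeneralLinearGroup.val_det_apply] using (Matrix.mem_glpos _).1 A.prop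

lemma wtSlash_mul (k : ℤ) (A B : GL(2, ℝ)⁺) (f : ℍ → ℂ) :
    wtSlash k (A * B) f = wtSlash k B (wtSlash k A f) := by
  funext τ
  have hcocycle : denom ((A : GL (Fin 2) ℝ) * B) τ = denom A (B • τ : ℍ) * denom B τ := by
    have hB : 0 < (B : GL (Fin 2) ℝ).det.val := by
      simpa only [GeneralLinearGroup.val_det_apply] using det_pos_of_glPos B
    rw [denom_cocycle_σ, σ, if_pos hB, ContinuousAlgEquiv.refl_apply]
    rfl
  simp only [wtSlash, Subgroup.coe_mul, hcocycle, mul_smul, Units.val_mul, Matrix.det_mul,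
    Real.mul_rpow (det_pos_of_glPos A).le (det_pos_of_glPos B).le, Complex.ofReal_mul, mul_zpow]
  ring

lemma wtSlash_smul (k : ℤ) (A : GL(2, ℝ)⁺) (a : ℂ) (f : ℍ → ℂ) :
    wtSlash k A (a • f) = a • wtSlash k A f := by
  funext τ
  simp only [wtSlash, Pi.smul_apply, smul_eq_mul]
  ring

lemma wtSlash_pow_of_eq_neg (k : ℤ) (A : GL(2, ℝ)⁺) {f : ℍ → ℂ}
    (hf : wtSlash k A f = -f) (n : ℕ) : wtSlash k (A ^ n) f = (-1 : ℂ) ^ n • f := by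
  induction n with
  | zero => funext τ; simp [wtSlash]
  | succ n ih =>
    rw [pow_succ, wtSlash_mul, ih, wtSlash_smul, hf, pow_succ, mul_smul, neg_one_smul]

lemma wtSlash_eq_self_of_eq_scalar (k : ℤ) (hk : Even k) (A : GL(2, ℝ)⁺) (c : ℝ)
    (hA : ((A : GL (Fin 2) ℝ) : Matrix (Fin 2) (Fin 2) ℝ) = Matrix.scalar (Fin 2) c)
    (f : ℍ → ℂ) : wtSlash k A f = f := by
  have hdet : ((A : GL (Fin 2) ℝ) : Matrix (Fin 2) (Fin 2) ℝ).det = c ^ 2 := by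
    rw [hA]; simp [sq]
  have hc : c ≠ 0 := by
    rintro rfl
    simpa [hdet] using det_pos_of_glPos A
  have hA' : (A : GL (Fin 2) ℝ) = GeneralLinearGroup.scalar (Fin 2) (Units.mk0 c hc) := by
    ext1; exact hA
  have hpow : ((c ^ 2) ^ ((k : ℝ) / 2) : ℝ) = c ^ k := by
    obtain ⟨m, rfl⟩ := hk
    rw [show ((m + m : ℤ) : ℝ) / 2 = (m : ℝ) by push_cast; ring, Real.rpow_intCast,
      ← zpow_natCast, ← _root_.zpow_mul]
    congr 1
    ring
  funext τ
  simp only [wtSlash, hdet, hpow]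
  rw [Subgroup.smul_def, hA', denom_scalar, glScalar_smul, Units.val_mk0, Complex.ofReal_zpow,
    ← zpow_add₀ (Complex.ofReal_ne_zero.2 hc), add_neg_cancel, zpow_zero, one_mul]

lemma W4_mul_Thalf_pow_three :
    ((((W4 * Thalf) ^ 3 : GL(2, ℝ)⁺) : GL (Fin 2) ℝ) : Matrix (Fin 2) (Fin 2) ℝ) =
      Matrix.scalar (Fin 2) (-8) := by
  change (!![(0 : ℝ), -1; 4, 0] * !![1, 1 / 2; 0, 1]) ^ 3 = _
  ext i j
  fin_cases i <;> fin_cases j <;> norm_num [pow_succ, Matrix.mul_fin_two]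

theorem fricke_no_fixed_vector_general (k : ℤ) (hke : Even k)
    (g : CuspForm (Gamma0 4) k)
    (hT : wtSlash k Thalf ⇑g = -⇑g) (hW : wtSlash k W4 ⇑g = ⇑g) :
    g = 0 := by
  have hWT : wtSlash k (W4 * Thalf) ⇑g = -⇑g := by rw [wtSlash_mul, hW, hT]
  have hg : ⇑g = -⇑g := by
    have h := wtSlash_pow_of_eq_neg k _ hWT 3
    rwa [wtSlash_eq_self_of_eq_scalar k hke _ (-8) W4_mul_Thalf_pow_three,
      show (-1 : ℂ) ^ 3 = -1 by norm_num, neg_one_smul] at h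
  exact DFunLike.coe_injective (self_eq_neg.mp hg)

/-- a cusp form of even positive weight `k` for `Γ₀(4)` with
`g∣[k]T_{1/2} = -g` cannot be fixed by the Fricke involution `W₄` unless it is zero. -/
theorem fricke_no_fixed_vector (k : ℤ) (hk : 0 < k) (hke : Even k)
    (g : CuspForm (Gamma0 4) k)
    (hT : wtSlash k Thalf ⇑g = -⇑g) (hW : wtSlash k W4 ⇑g = ⇑g) :
    g = 0 :=
  fricke_no_fixed_vector_general k hke g hT hW

end
end

section
/- There exists a nonzero cusp form f of weight 6 for Γ(2) satisfying f∣[6]γ = χ(γ)·f for all γ ∈ SL(2,ℤ), where χ is the unique group homomorphism SL(2,ℤ) → ℂˣ with χ(S) = χ(T) = -1. Equivalently, there exists a nonzero cusp form f of weight 6 for Γ(2) with f∣[6]S = -f and f∣[6]T = -f. -/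
/-!
Take `f = η¹²`. From `η(τ + 1) = e^{πi/12} η(τ)` and `η(-1/τ) = √(-iτ) η(τ)` one gets
`f ∣[6] T = f ∣[6] S = -f`, so `f` transforms under `SL(2, ℤ)` by `χ`, since `S` and `T` generate.
On the generators `χ` agrees with the sign of the permutation by which `SL(2, 𝔽₂) ≅ S₃` acts on
`𝔽₂²`, so `χ` is trivial on `Γ(2)` and `f` is invariant there. Finally `f` is holomorphic and
nowhere zero, and vanishes at `i∞` because `f² = Δ` does.
-/

open UpperHalfPlane Matrix MatrixGroups CongruenceSubgroup

noncomputable section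

open ModularForm ModularGroup Filter
open Complex hiding Gamma
open scoped Real Topology Manifold

lemma wtSlash_toGL (k : ℤ) (γ : SL(2, ℤ)) (f : ℍ → ℂ) : wtSlash k (toGL γ) f = f ∣[k] γ := by
  have hdet : ((toGL γ : GL (Fin 2) ℝ) : Matrix (Fin 2) (Fin 2) ℝ).det = 1 := by
    rw [toGL, Matrix.SpecialLinearGroup.coe_GLPos_coe_GL_coe_matrix]
    exact Matrix.SpecialLinearGroup.det_coe _
  ext τ
  rw [wtSlash, hdet, Real.one_rpow, Complex.ofReal_one, one_mul, SL_slash_apply, mul_comm]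
  rfl

theorem slash_eq_smul_of_slash_S_of_slash_T {k : ℤ} {f : ℍ → ℂ} {χ : SL(2, ℤ) →* ℂˣ}
    (hS : f ∣[k] S = (χ S : ℂ) • f) (hT : f ∣[k] T = (χ T : ℂ) • f) (γ : SL(2, ℤ)) :
    f ∣[k] γ = (χ γ : ℂ) • f := by
  have hγ : γ ∈ Subgroup.closure {S, T} := by simp [SpecialLinearGroup.SL2Z_generators]
  induction hγ using Subgroup.closure_induction with
  | mem g hg => rcases hg with rfl | rfl <;> assumption
  | one => simp
  | mul g h _ _ hg hh =>
    rw [SlashAction.slash_mul, hg, SL_smul_slash, hh, smul_smul, map_mul, Units.val_mul]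
  | inv g _ hg =>
    have hf : (χ g : ℂ) • f ∣[k] g⁻¹ = f := by
      rw [← SL_smul_slash, ← hg, ← SlashAction.slash_mul, mul_inv_cancel, SlashAction.slash_one]
    rw [map_inv, Units.val_inv_eq_inv_val, ← hf, smul_smul, inv_mul_cancel₀ (Units.ne_zero _),
      one_smul, hf]

def signModTwo : SL(2, ℤ) →* ℤˣ :=
  Equiv.Perm.sign.comp <| (MulAction.toPermHom SL(2, ZMod 2) (Fin 2 → ZMod 2)).comp <|
    Matrix.SpecialLinearGroup.map (Int.castRingHom (ZMod 2))

lemma signModTwo_S : signModTwo S = -1 := by decide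

lemma signModTwo_T : signModTwo T = -1 := by decide

lemma Gamma_two_le_ker_signModTwo : Gamma 2 ≤ signModTwo.ker := fun γ hγ => by
  rw [MonoidHom.mem_ker, signModTwo, MonoidHom.comp_apply, MonoidHom.comp_apply,
    MonoidHom.mem_ker.mp hγ, map_one, map_one]

lemma Gamma_two_le_ker_of_apply_S_of_apply_T {χ : SL(2, ℤ) →* ℂˣ}
    (hS : (χ S : ℂ) = -1) (hT : (χ T : ℂ) = -1) : Gamma 2 ≤ χ.ker := by
  have hχ : χ = (Units.map (Int.castRingHom ℂ : ℤ →* ℂ)).comp signModTwo := by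
    refine MonoidHom.eq_of_eqOn_dense SpecialLinearGroup.SL2Z_generators ?_
    rintro γ (rfl | rfl) <;> ext <;> simp [signModTwo_S, signModTwo_T, hS, hT]
  intro γ hγ
  simp [hχ, MonoidHom.mem_ker.mp (Gamma_two_le_ker_signModTwo hγ)]

lemma eta_add_one (z : ℂ) : η (z + 1) = cexp (π * Complex.I / 12) * η z := by
  have hq : ∀ n, eta_q n (z + 1) = eta_q n z := fun n => by
    rw [eta_q_eq_pow, eta_q_eq_pow, mul_add, mul_one, exp_add, exp_two_pi_mul_I, mul_one]
  simp only [ModularForm.eta, hq, Function.Periodic.qParam, ← mul_assoc, ← exp_add]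
  congr 2
  push_cast
  ring

lemma sqrt_pow_two_mul (z : ℂ) (n : ℕ) : Complex.sqrt z ^ (2 * n) = z ^ n := by
  rw [pow_mul, Complex.sqrt, cpow_ofNat_inv_pow]

def etaTwelve (z : ℍ) : ℂ := η z ^ 12

lemma etaTwelve_slash_T : etaTwelve ∣[(6 : ℤ)] T = -etaTwelve := by
  ext z
  have hd : denom T z = 1 := by simp [ModularGroup.denom_apply, ModularGroup.coe_T]
  have hz : ((T • z : ℍ) : ℂ) = z + 1 := by rw [modular_T_smul, coe_vadd]; push_cast; ring
  rw [SL_slash_apply, hd, _root_.one_zpow, mul_one, etaTwelve, hz, eta_add_one, mul_pow,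
    ← exp_nat_mul, show ((12 : ℕ) : ℂ) * (π * Complex.I / 12) = π * Complex.I by push_cast; ring,
    exp_pi_mul_I, neg_one_mul]
  rfl

lemma etaTwelve_slash_S : etaTwelve ∣[(6 : ℤ)] S = -etaTwelve := by
  ext z
  have hη : η (-z : ℂ)⁻¹ = (Complex.sqrt Complex.I)⁻¹ * (Complex.sqrt z * η z) := by
    simpa [neg_div] using eta_comp_eq_csqrt_I_inv z.2
  have hI : Complex.sqrt Complex.I ^ 12 = -1 := by
    rw [show 12 = 2 * 6 by rfl, sqrt_pow_two_mul, show 6 = 4 + 2 by rfl, pow_add, I_pow_four,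
      I_sq, one_mul]
  rw [SlashInvariantForm.slash_S_apply, Pi.neg_apply, etaTwelve, etaTwelve, UpperHalfPlane.coe_mk,
    hη, mul_pow, mul_pow, inv_pow, hI, show 12 = 2 * 6 by rfl, sqrt_pow_two_mul, _root_.zpow_neg,
    zpow_ofNat]
  field_simp [z.ne_zero]

lemma mdifferentiable_etaTwelve : MDifferentiable 𝓘(ℂ) 𝓘(ℂ) etaTwelve := by
  rw [UpperHalfPlane.mdifferentiable_iff]
  refine .congr (fun z hz ↦ (differentiableAt_eta_of_mem_upperHalfPlaneSet hz).pow
    12 |>.differentiableWithinAt) fun z hz ↦ ?_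
  simp [etaTwelve, ofComplex_apply_of_im_pos hz]

lemma etaTwelve_isZeroAtImInfty : IsZeroAtImInfty etaTwelve := by
  have hΔ : Tendsto (fun z => √‖discriminant z‖) atImInfty (𝓝 0) := by
    simpa [Function.comp_def] using
      (Real.continuous_sqrt.tendsto 0).comp (tendsto_norm_zero.comp discriminant_isZeroAtImInfty)
  refine tendsto_zero_iff_norm_tendsto_zero.mpr (hΔ.congr fun z => ?_)
  rw [discriminant, show 24 = 12 * 2 by rfl, pow_mul, norm_pow, Real.sqrt_sq (norm_nonneg _)]
  rfl

lemma etaTwelve_ne_zero (z : ℍ) : etaTwelve z ≠ 0 := pow_ne_zero _ (eta_ne_zero z.2)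

def CuspForm.ofCharacter {Γ : Subgroup SL(2, ℤ)} {k : ℤ} (χ : SL(2, ℤ) →* ℂˣ) (hΓ : Γ ≤ χ.ker)
    (f : ℍ → ℂ) (hf : ∀ γ : SL(2, ℤ), f ∣[k] γ = (χ γ : ℂ) • f)
    (hholo : MDifferentiable 𝓘(ℂ) 𝓘(ℂ) f) (hzero : IsZeroAtImInfty f) : CuspForm Γ k where
  toFun := f
  slash_action_eq' γ hγ := by
    obtain ⟨γ, hγ, rfl⟩ := hγ
    change f ∣[k] γ = f
    rw [hf, MonoidHom.mem_ker.mp (hΓ hγ), Units.val_one, one_smul]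
  holo' := hholo
  zero_at_cusps' hc := by
    rw [OnePoint.isZeroAt_iff_forall_SL2Z (hc.mono (Subgroup.map_le_range _ _))]
    intro γ _
    rw [hf]
    exact hzero.smul _

/-- there is a nonzero cusp form of weight `6` for `Γ(2)` transforming under
`SL(2,ℤ)` by the character `χ` with `χ(S) = χ(T) = -1`; equivalently, a nonzero cusp form
`f` of weight `6` for `Γ(2)` with `f∣[6]S = -f` and `f∣[6]T = -f`. -/
theorem exists_nonzero_weight_six_chi_form (χ : SL(2, ℤ) →* ℂˣ)
    (hS : (χ ModularGroup.S : ℂ) = -1) (hT : (χ ModularGroup.T : ℂ) = -1) :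
    ∃ f : CuspForm (Gamma 2) 6, f ≠ 0 ∧
      (∀ γ : SL(2, ℤ), wtSlash 6 (toGL γ) ⇑f = (χ γ : ℂ) • ⇑f) ∧
      wtSlash 6 (toGL ModularGroup.S) ⇑f = -⇑f ∧
      wtSlash 6 (toGL ModularGroup.T) ⇑f = -⇑f := by
  have hslash : ∀ γ : SL(2, ℤ), etaTwelve ∣[(6 : ℤ)] γ = (χ γ : ℂ) • etaTwelve :=
    slash_eq_smul_of_slash_S_of_slash_T (by rw [etaTwelve_slash_S, hS, neg_one_smul])
      (by rw [etaTwelve_slash_T, hT, neg_one_smul])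
  refine ⟨CuspForm.ofCharacter χ (Gamma_two_le_ker_of_apply_S_of_apply_T hS hT) etaTwelve hslash
    mdifferentiable_etaTwelve etaTwelve_isZeroAtImInfty, fun h => ?_, fun γ => ?_, ?_, ?_⟩
  · exact etaTwelve_ne_zero UpperHalfPlane.I (congr_fun (congrArg DFunLike.coe h) _)
  · exact (wtSlash_toGL 6 γ _).trans (hslash γ)
  · exact (wtSlash_toGL 6 S _).trans etaTwelve_slash_S
  · exact (wtSlash_toGL 6 T _).trans etaTwelve_slash_T

end
end
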